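/- If θ₁₁, θ₁₂, θ₂₁, θ₂₂ satisfy the unitarity conditions and θ₁₁, θ₁₂ are proportional (θ₁₁ = α₁θ, θ₁₂ = α₂θ for an inner θ and constants with |α₁|²+|α₂|²=1), then the associated invariant subspace Y = {(θ₂₁u₁+θ₂₂u₂) ⊕ P₋(\overline{θ₁₁}u₁+\overline{θ₁₂}u₂)} splits, i.e., Y = X ⊕ X′ with X ⊆ H² invariant under S and X′ ⊆ H²₋ invariant under S₊. -/

import Mathlib

open MeasureTheory Complex Real
open scoped ComplexConjugate ENNReal

noncomputable section

namespace SS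

abbrev T : ℝ := 2 * Real.pi

instance : Fact (0 < T) := ⟨by positivity⟩

/-- Normalized Haar (Lebesgue) measure on the circle. -/
abbrev μ : Measure (AddCircle T) := AddCircle.haarAddCircle

/-- The space `L²` of the circle. -/
abbrev L2 := Lp ℂ 2 μ

/-- The Hardy space `H²`: the closed span of the nonnegative Fourier modes. -/
def H2 : Submodule ℂ L2 :=
  (Submodule.span ℂ {f : L2 | ∃ n : ℕ, f = fourierLp 2 (n : ℤ)}).topologicalClosure

instance : CompleteSpace H2 :=
  IsClosed.completeSpace_coe (hs := Submodule.isClosed_topologicalClosure _)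

/-- `H²₋ = L² ⊖ H²`. -/
def H2m : Submodule ℂ L2 := H2ᗮ

instance : CompleteSpace H2m :=
  IsClosed.completeSpace_coe (hs := Submodule.isClosed_orthogonal H2)

/-- Orthogonal projection `P₊` of `L²` onto `H²`, seen as an operator on `L²`. -/
def Pplus : L2 →ₗ[ℂ] L2 := H2.subtype.comp H2.orthogonalProjectionOnto.toLinearMap

/-- Orthogonal projection `P₋` of `L²` onto `H²₋`, seen as an operator on `L²`. -/
def Pminus : L2 →ₗ[ℂ] L2 := H2m.subtype.comp H2m.orthogonalProjectionOnto.toLinearMap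

theorem memL2_mul_of_bound {φ : AddCircle T → ℂ} (hm : AEStronglyMeasurable φ μ)
    {C : ℝ} (hb : ∀ᵐ t ∂μ, ‖φ t‖ ≤ C) (f : L2) :
    MemLp (fun t => φ t * (f : AddCircle T → ℂ) t) 2 μ := by
  have h1 : MemLp φ ∞ μ := memLp_top_of_bound hm C hb
  simpa [smul_eq_mul] using (Lp.memLp f).mul' (r := 2) h1

/-- Multiplication by a bounded measurable function, as an operator on `L²`. -/
def mulOp (φ : AddCircle T → ℂ) (hm : AEStronglyMeasurable φ μ)
    {C : ℝ} (hb : ∀ᵐ t ∂μ, ‖φ t‖ ≤ C) : L2 →ₗ[ℂ] L2 where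
  toFun f := (memL2_mul_of_bound hm hb f).toLp _
  map_add' f g := by
    apply Lp.ext
    filter_upwards [MemLp.coeFn_toLp (memL2_mul_of_bound hm hb (f + g)),
      MemLp.coeFn_toLp (memL2_mul_of_bound hm hb f),
      MemLp.coeFn_toLp (memL2_mul_of_bound hm hb g),
      Lp.coeFn_add ((memL2_mul_of_bound hm hb f).toLp _)
        ((memL2_mul_of_bound hm hb g).toLp _),
      Lp.coeFn_add f g] with t h1 h2 h3 h4 h5
    simp only [h1, h4, Pi.add_apply, h2, h3, h5]
    ring
  map_smul' c f := by
    apply Lp.ext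
    filter_upwards [MemLp.coeFn_toLp (memL2_mul_of_bound hm hb (c • f)),
      MemLp.coeFn_toLp (memL2_mul_of_bound hm hb f),
      Lp.coeFn_smul c ((memL2_mul_of_bound hm hb f).toLp _),
      Lp.coeFn_smul c f] with t h1 h2 h3 h4
    simp only [RingHom.id_apply, h1, h3, Pi.smul_apply, h2, h4, smul_eq_mul]
    ring

/-- The function `e^{it}` on the circle. -/
def φz : AddCircle T → ℂ := fun t => fourier 1 t

theorem φz_meas : AEStronglyMeasurable φz μ := (fourier 1).continuous.aestronglyMeasurable

theorem φz_bound : ∀ᵐ t ∂μ, ‖φz t‖ ≤ 1 :=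
  Filter.Eventually.of_forall fun t => le_of_eq (Circle.norm_coe _)

/-- Multiplication by `z = e^{it}` on `L²`. -/
def Mz : L2 →ₗ[ℂ] L2 := mulOp φz φz_meas φz_bound

/-- The operator `S ⊕ S₊` on `L² = H² ⊕ H²₋` (internal orthogonal decomposition):
it acts as `Mz` on the `H²`-component and as `P₋ Mz` on the `H²₋`-component. -/
def D : L2 →ₗ[ℂ] L2 := Mz.comp Pplus + (Pminus.comp (Mz.comp Pminus))

/-- The set `φ·M ⊆ L²`, for a function `φ` on the circle and a set `M ⊆ L²`,
defined via a.e. representatives. -/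
def mulSet (φ : AddCircle T → ℂ) (M : Set L2) : Set L2 :=
  {g | ∃ f ∈ M, ⇑g =ᵐ[μ] fun t => φ t * f t}

/-- The model space `K_θ = H² ⊖ θH²`, as a subset of `L²`. -/
def Kset (θ : AddCircle T → ℂ) : Set L2 :=
  {f | f ∈ H2 ∧ ∀ g ∈ mulSet θ (H2 : Set L2), inner (𝕜 := ℂ) g f = 0}

/-- `θ` is (the boundary function of) an inner function: it is measurable, its negative
Fourier coefficients vanish (i.e. it belongs to `H²`, hence to `H^∞`), and it has
unimodular boundary values a.e. -/
structure IsInner (θ : AddCircle T → ℂ) : Prop where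
  meas : AEStronglyMeasurable θ μ
  coeff : ∀ n : ℤ, n < 0 → fourierCoeff θ n = 0
  unimod : ∀ᵐ t ∂μ, ‖θ t‖ = 1

/-- `φ` is (the boundary function of) an element of the closed unit ball of `H^∞`. -/
structure MemBallHinf (φ : AddCircle T → ℂ) : Prop where
  meas : AEStronglyMeasurable φ μ
  coeff : ∀ n : ℤ, n < 0 → fourierCoeff φ n = 0
  bound : ∀ᵐ t ∂μ, ‖φ t‖ ≤ 1

theorem IsInner.memBall {θ : AddCircle T → ℂ} (h : IsInner θ) : MemBallHinf θ :=
  ⟨h.meas, h.coeff, h.unimod.mono fun _ ht => le_of_eq ht⟩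

theorem aeNeg {g g' : AddCircle T → ℂ} (h : g =ᵐ[μ] g') :
    (fun t => g (-t)) =ᵐ[μ] fun t => g' (-t) :=
  (Measure.measurePreserving_neg μ).quasiMeasurePreserving.ae_eq_comp h

theorem memL2_J (f : L2) :
    MemLp (fun t => (fourier (-1) t : ℂ) * (f : L2) (-t)) 2 μ := by
  have h1 : MemLp (fun t : AddCircle T => (f : L2) (-t)) 2 μ :=
    (Lp.memLp f).comp_measurePreserving (Measure.measurePreserving_neg μ)
  have h2 : MemLp (fun t : AddCircle T => (fourier (-1) t : ℂ)) ∞ μ :=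
    memLp_top_of_bound (fourier (-1)).continuous.aestronglyMeasurable 1
      (Filter.Eventually.of_forall fun _ => le_of_eq (Circle.norm_coe _))
  simpa [smul_eq_mul] using h1.mul' (r := 2) h2

/-- The operator `J` on `L²`: `(Jf)(e^{it}) = e^{-it} f(e^{-it})`. -/
def Jop : L2 →ₗ[ℂ] L2 where
  toFun f := (memL2_J f).toLp _
  map_add' f g := by
    apply Lp.ext
    filter_upwards [MemLp.coeFn_toLp (memL2_J (f + g)), MemLp.coeFn_toLp (memL2_J f),
      MemLp.coeFn_toLp (memL2_J g),
      Lp.coeFn_add ((memL2_J f).toLp _) ((memL2_J g).toLp _),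
      aeNeg (Lp.coeFn_add f g)] with t h1 h2 h3 h4 h5
    simp only [h1, h4, Pi.add_apply, h2, h3, h5]
    ring
  map_smul' c f := by
    apply Lp.ext
    filter_upwards [MemLp.coeFn_toLp (memL2_J (c • f)), MemLp.coeFn_toLp (memL2_J f),
      Lp.coeFn_smul c ((memL2_J f).toLp _),
      aeNeg (Lp.coeFn_smul c f)] with t h1 h2 h3 h4
    simp only [RingHom.id_apply, h1, h3, Pi.smul_apply, h2, h4, smul_eq_mul]
    ring

/-- The subspace `Y = {(θ₂₁u₁+θ₂₂u₂) ⊕ P₋(conj θ₁₁ u₁ + conj θ₁₂ u₂) : u₁,u₂ ∈ H²}`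
inside `L² = H² ⊕ H²₋` (internal orthogonal decomposition). -/
def YSet (θ11 θ12 θ21 θ22 : AddCircle T → ℂ) : Set L2 :=
  {y | ∃ u1 ∈ (H2 : Set L2), ∃ u2 ∈ (H2 : Set L2), ∃ g h : L2, g ∈ H2 ∧
    (⇑g =ᵐ[μ] fun t => θ21 t * u1 t + θ22 t * u2 t) ∧
    (⇑h =ᵐ[μ] fun t => (starRingEnd ℂ) (θ11 t) * u1 t + (starRingEnd ℂ) (θ12 t) * u2 t) ∧
    y = g + Pminus h}

/-- `g` is (the boundary function of) an outer function:
`log |g(0)| = ∫ log |g| dm`, where `g(0)` is the 0-th Fourier coefficient. -/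
structure IsOuter (g : AddCircle T → ℂ) : Prop where
  meas : AEStronglyMeasurable g μ
  coeff : ∀ n : ℤ, n < 0 → fourierCoeff g n = 0
  ne_zero : ¬ g =ᵐ[μ] 0
  outer : Real.log ‖fourierCoeff g 0‖ = ∫ t, Real.log ‖g t‖ ∂μ


/-! ### Auxiliary lemmas -/

theorem Mz_coe (f : L2) : ⇑(Mz f) =ᵐ[μ] fun t => φz t * f t :=
  MemLp.coeFn_toLp (memL2_mul_of_bound φz_meas φz_bound f)

theorem Mz_norm (f : L2) : ‖Mz f‖ ≤ 1 * ‖f‖ := by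
  rw [one_mul]
  have h1 : eLpNorm (fun t => φz t * (f : AddCircle T → ℂ) t) 2 μ ≤ eLpNorm (⇑f) 2 μ := by
    apply eLpNorm_mono_ae
    filter_upwards [φz_bound] with t ht
    calc ‖φz t * (f : AddCircle T → ℂ) t‖ = ‖φz t‖ * ‖f t‖ := norm_mul _ _
      _ ≤ 1 * ‖f t‖ := by gcongr
      _ = ‖f t‖ := one_mul _
  calc ‖Mz f‖ = (eLpNorm (fun t => φz t * (f : AddCircle T → ℂ) t) 2 μ).toReal :=
        Lp.norm_toLp _ (memL2_mul_of_bound φz_meas φz_bound f)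
    _ ≤ (eLpNorm (⇑f) 2 μ).toReal := ENNReal.toReal_mono (Lp.eLpNorm_ne_top f) h1
    _ = ‖f‖ := (Lp.norm_def f).symm

/-- `Mz` as a continuous linear map. -/
def MzC : L2 →L[ℂ] L2 := Mz.mkContinuous 1 Mz_norm

theorem Mz_mem_H2 {f : L2} (hf : f ∈ H2) : Mz f ∈ H2 := by
  have key : H2 ≤ Submodule.comap (MzC : L2 →L[ℂ] L2).toLinearMap H2 := by
    apply Submodule.topologicalClosure_minimal
    · rw [Submodule.span_le]
      rintro f ⟨n, rfl⟩
      have heq : Mz (fourierLp 2 (n : ℤ)) = fourierLp 2 ((n : ℤ) + 1) := by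
        apply Lp.ext
        filter_upwards [Mz_coe (fourierLp 2 (n : ℤ)), coeFn_fourierLp 2 (n : ℤ),
          coeFn_fourierLp 2 ((n : ℤ) + 1)] with t h1 h2 h3
        rw [h1, h2, h3]
        show φz t * (fourier (n : ℤ) t : ℂ) = fourier ((n : ℤ) + 1) t
        rw [add_comm, fourier_add]
        rfl
      show Mz (fourierLp 2 (n : ℤ)) ∈ H2
      rw [heq]
      exact Submodule.le_topologicalClosure _
        (Submodule.subset_span ⟨n + 1, by push_cast; ring_nf⟩)
    · exact (Submodule.isClosed_topologicalClosure _).preimage MzC.continuous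
  exact key hf

theorem Pplus_mem (f : L2) : Pplus f ∈ H2 := (H2.orthogonalProjectionOnto f).2

theorem Pminus_mem (f : L2) : Pminus f ∈ H2m := (H2m.orthogonalProjectionOnto f).2

theorem Pminus_eq_zero {f : L2} (hf : f ∈ H2) : Pminus f = 0 := by
  have h2 : f ∈ H2mᗮ := H2.le_orthogonal_orthogonal hf
  show (H2m.subtype) (H2m.orthogonalProjectionOnto f) = 0
  rw [Submodule.orthogonalProjectionOnto_apply_of_mem_orthogonal h2]
  simp

theorem Pplus_add_Pminus (f : L2) : Pplus f + Pminus f = f :=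
  H2.starProjection_add_starProjection_orthogonal f

theorem coeFn_comb (a b : ℂ) (u1 u2 : L2) :
    ⇑(a • u1 + b • u2) =ᵐ[μ] fun t => a * u1 t + b * u2 t := by
  filter_upwards [Lp.coeFn_add (a • u1) (b • u2), Lp.coeFn_smul a u1,
    Lp.coeFn_smul b u2] with t h1 h2 h3
  simp only [h1, Pi.add_apply, h2, h3, Pi.smul_apply, smul_eq_mul]

/-- if `θ₁₁, θ₁₂` are proportional then `Y` splits. -/
theorem stmt11_splits (θ11 θ12 θ21 θ22 θ : AddCircle T → ℂ) (α1 α2 : ℂ)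
    (h11 : MemBallHinf θ11) (h12 : MemBallHinf θ12)
    (h21 : MemBallHinf θ21) (h22 : MemBallHinf θ22)
    (hu1 : ∀ᵐ t ∂μ, ‖θ11 t‖ ^ 2 + ‖θ12 t‖ ^ 2 = 1)
    (hu2 : ∀ᵐ t ∂μ, ‖θ21 t‖ ^ 2 + ‖θ22 t‖ ^ 2 = 1)
    (hu3 : ∀ᵐ t ∂μ, θ11 t * θ21 t + θ12 t * θ22 t = 0)
    (hθ : IsInner θ) (hα : ‖α1‖ ^ 2 + ‖α2‖ ^ 2 = 1)
    (hp1 : θ11 =ᵐ[μ] fun t => α1 * θ t) (hp2 : θ12 =ᵐ[μ] fun t => α2 * θ t) :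
    ∃ X X' : Set L2, X ⊆ (H2 : Set L2) ∧ X' ⊆ (H2m : Set L2) ∧
      (∀ f : L2, f ∈ X → Mz f ∈ X) ∧
      (∀ f : L2, f ∈ X' → Pminus (Mz f) ∈ X') ∧
      YSet θ11 θ12 θ21 θ22 = {y : L2 | ∃ x ∈ X, ∃ x' ∈ X', y = x + x'} := by
  -- constants
  have hn : (starRingEnd ℂ) α1 * α1 + (starRingEnd ℂ) α2 * α2 = 1 := by
    have h1 : (starRingEnd ℂ) α1 * α1 = ((‖α1‖ ^ 2 : ℝ) : ℂ) := by
      rw [mul_comm, Complex.mul_conj]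
      norm_cast
      rw [Complex.normSq_eq_norm_sq]
    have h2 : (starRingEnd ℂ) α2 * α2 = ((‖α2‖ ^ 2 : ℝ) : ℂ) := by
      rw [mul_comm, Complex.mul_conj]
      norm_cast
      rw [Complex.normSq_eq_norm_sq]
    rw [h1, h2]
    norm_cast
  -- column orthogonality after dividing out `θ`
  have hc : ∀ᵐ t ∂μ, α1 * θ21 t + α2 * θ22 t = 0 := by
    filter_upwards [hu3, hp1, hp2, hθ.unimod] with t h3 hq1 hq2 hun
    have hθne : θ t ≠ 0 := by
      intro h; rw [h, norm_zero] at hun; norm_num at hun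
    have hz : θ t * (α1 * θ21 t + α2 * θ22 t) = 0 := by
      rw [hq1, hq2] at h3
      linear_combination h3
    rcases mul_eq_zero.1 hz with h | h
    · exact absurd h hθne
    · exact h
  -- the splitting subspaces
  refine ⟨{x : L2 | x ∈ H2 ∧ ∃ v ∈ (H2 : Set L2),
      ⇑x =ᵐ[μ] fun t => ((starRingEnd ℂ) α1 * θ22 t - (starRingEnd ℂ) α2 * θ21 t) * v t},
    {x' : L2 | ∃ v ∈ (H2 : Set L2), ∃ h : L2,
      (⇑h =ᵐ[μ] fun t => (starRingEnd ℂ) (θ t) * v t) ∧ x' = Pminus h},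
    fun _ hx => hx.1, ?_, ?_, ?_, ?_⟩
  · -- X' ⊆ H2m
    rintro x' ⟨v, hv, h, hh, rfl⟩
    exact Pminus_mem h
  · -- X is S-invariant
    rintro f ⟨hf, v, hv, hfe⟩
    refine ⟨Mz_mem_H2 hf, Mz v, Mz_mem_H2 hv, ?_⟩
    filter_upwards [Mz_coe f, Mz_coe v, hfe] with t h1 h2 h3
    rw [h1, h3, h2]
    ring
  · -- X' is S₊-invariant
    rintro f ⟨v, hv, h, hh, rfl⟩
    refine ⟨Mz v, Mz_mem_H2 hv, Mz h, ?_, ?_⟩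
    · filter_upwards [Mz_coe h, Mz_coe v, hh] with t h1 h2 h3
      rw [h1, h3, h2]
      ring
    · have hsub : Pminus h = h - Pplus h := eq_sub_of_add_eq' (Pplus_add_Pminus h)
      have h0 : Pminus (Mz (Pplus h)) = 0 := Pminus_eq_zero (Mz_mem_H2 (Pplus_mem h))
      rw [hsub, map_sub, map_sub, h0, sub_zero]
  · -- the set equality
    ext y
    constructor
    · rintro ⟨u1, hm1, u2, hm2, g, h, hg, hge, hhe, rfl⟩
      have hv1m : (starRingEnd ℂ) α1 • u1 + (starRingEnd ℂ) α2 • u2 ∈ H2 :=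
        H2.add_mem (H2.smul_mem _ hm1) (H2.smul_mem _ hm2)
      have hv2m : (-α2) • u1 + α1 • u2 ∈ H2 :=
        H2.add_mem (H2.smul_mem _ hm1) (H2.smul_mem _ hm2)
      refine ⟨g, ⟨hg, (-α2) • u1 + α1 • u2, hv2m, ?_⟩,
        Pminus h, ⟨(starRingEnd ℂ) α1 • u1 + (starRingEnd ℂ) α2 • u2, hv1m, h, ?_, rfl⟩, rfl⟩
      · filter_upwards [hge, coeFn_comb (-α2) α1 u1 u2, hc] with t h1 h2 h3
        rw [h1, h2]
        linear_combination (-(θ21 t * u1 t + θ22 t * u2 t)) * hn +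
          ((starRingEnd ℂ) α1 * u1 t + (starRingEnd ℂ) α2 * u2 t) * h3
      · filter_upwards [hhe, coeFn_comb ((starRingEnd ℂ) α1) ((starRingEnd ℂ) α2) u1 u2,
          hp1, hp2] with t h1 h2 hq1 hq2
        rw [h1, h2, hq1, hq2]
        simp only [map_mul]
        ring
    · rintro ⟨x, ⟨hx, v2, hv2m, hxe⟩, x', ⟨v1, hv1m, h, hhe, rfl⟩, rfl⟩
      have hm1 : α1 • v1 + (-(starRingEnd ℂ) α2) • v2 ∈ H2 :=
        H2.add_mem (H2.smul_mem _ hv1m) (H2.smul_mem _ hv2m)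
      have hm2 : α2 • v1 + (starRingEnd ℂ) α1 • v2 ∈ H2 :=
        H2.add_mem (H2.smul_mem _ hv1m) (H2.smul_mem _ hv2m)
      refine ⟨α1 • v1 + (-(starRingEnd ℂ) α2) • v2, hm1,
        α2 • v1 + (starRingEnd ℂ) α1 • v2, hm2, x, h, hx, ?_, ?_, rfl⟩
      · filter_upwards [hxe, coeFn_comb α1 (-(starRingEnd ℂ) α2) v1 v2,
          coeFn_comb α2 ((starRingEnd ℂ) α1) v1 v2, hc] with t h1 h2 h3 h4
        rw [h1, h2, h3]
        linear_combination (-(v1 t : ℂ)) * h4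
      · filter_upwards [hhe, coeFn_comb α1 (-(starRingEnd ℂ) α2) v1 v2,
          coeFn_comb α2 ((starRingEnd ℂ) α1) v1 v2, hp1, hp2] with t h1 h2 h3 hq1 hq2
        rw [h1, h2, h3, hq1, hq2]
        simp only [map_mul]
        linear_combination (-((starRingEnd ℂ) (θ t) * (v1 t : ℂ))) * hn

end SS
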